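/- arXiv:1810.03252 — 7 statements merged into one kernel-verified Lean document; each statement's English description precedes it below -/
import Mathlib

section
/- For every i = 0, …, n one has the identity S_{2i} + φ_{2i+1} · S_{2i+2} = (1 + α_{2i}/φ_{2i}) · S_{2i+1}. -/
/-!
Write `a j = α_{2i+2j}/φ_{2i+2j}` and `f j = φ_{2i+2j+1}`. All three sums are instances of one
chain sum `∑_{j ≤ n} (∏_{k<j} u k v k)(1 + u j)`, and the identity holds termwise up to the
telescoping defect `(P j - Q j) - (P (j+1) - Q (j+1))`, where `P j = ∏_{k<j} a k f k` and
`Q j = ∏_{k<j} f k a (k+1)`. The defect sums to `P (n+1) - Q (n+1)`, which vanishes because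
`a` is periodic: `a (n+1) = a 0` as `2(n+1) = 0` in `ZMod (2n+2)`.
-/

open Finset

/-- `S_{2i}`, evaluated at the even index `x = 2i` of `ZMod (2n+2)`. -/
noncomputable def Sev (n : ℕ) {K : Type*} [Field K] (α φ : ZMod (2*n+2) → K)
    (x : ZMod (2*n+2)) : K :=
  ∑ j ∈ range (n+1),
    (∏ k ∈ range j, (α (x + 2*k) / φ (x + 2*k)) * φ (x + 2*k + 1))
      * (1 + α (x + 2*j) / φ (x + 2*j))

/-- `S_{2i+1}`, evaluated at the odd index `x = 2i+1` of `ZMod (2n+2)`. -/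
noncomputable def Sod (n : ℕ) {K : Type*} [Field K] (α φ : ZMod (2*n+2) → K)
    (x : ZMod (2*n+2)) : K :=
  ∑ j ∈ range (n+1),
    (∏ k ∈ range j, φ (x + 2*k) * (α (x + 2*k + 1) / φ (x + 2*k + 1)))
      * (1 + φ (x + 2*j))

section ChainSum

variable {R : Type*} [CommRing R]

def chainSum (n : ℕ) (u v : ℕ → R) : R :=
  ∑ j ∈ range (n + 1), (∏ k ∈ range j, u k * v k) * (1 + u j)

theorem prod_range_mul_mul_self (u v : ℕ → R) (j : ℕ) :
    (∏ k ∈ range j, u k * v k) * u j = u 0 * ∏ k ∈ range j, v k * u (k + 1) := by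
  simp only [prod_mul_distrib]
  rw [mul_right_comm, ← prod_range_succ, prod_range_succ', mul_comm (∏ k ∈ range j, v k)]
  ring

theorem chainSum_add_mul_chainSum_succ (n : ℕ) (a f : ℕ → R) (ha : a (n + 1) = a 0) :
    chainSum n a f + f 0 * chainSum n (fun k ↦ a (k + 1)) (fun k ↦ f (k + 1))
      = (1 + a 0) * chainSum n f (fun k ↦ a (k + 1)) := by
  set P : ℕ → R := fun j ↦ ∏ k ∈ range j, a k * f k
  set Q : ℕ → R := fun j ↦ ∏ k ∈ range j, f k * a (k + 1)
  have hPa (j : ℕ) : P j * a j = a 0 * Q j := prod_range_mul_mul_self a f j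
  have hQf (j : ℕ) : Q j * f j = f 0 * ∏ k ∈ range j, a (k + 1) * f (k + 1) :=
    prod_range_mul_mul_self f (fun k ↦ a (k + 1)) j
  have hP_succ (j : ℕ) : P (j + 1) = P j * a j * f j := by simp [P, prod_range_succ, mul_assoc]
  have hQ_succ (j : ℕ) : Q (j + 1) = Q j * f j * a (j + 1) := by
    simp [Q, prod_range_succ, mul_assoc]
  have hPQ_end : P (n + 1) = Q (n + 1) := by
    rw [hP_succ, hQ_succ, hPa, ha]
    ring
  have hterm (j : ℕ) :
      P j * (1 + a j) + f 0 * ((∏ k ∈ range j, a (k + 1) * f (k + 1)) * (1 + a (j + 1)))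
        = (1 + a 0) * (Q j * (1 + f j)) + ((P j - Q j) - (P (j + 1) - Q (j + 1))) := by
    rw [hP_succ, hQ_succ]
    linear_combination (1 + f j) * hPa j - (1 + a (j + 1)) * hQf j
  calc chainSum n a f + f 0 * chainSum n (fun k ↦ a (k + 1)) (fun k ↦ f (k + 1))
      = ∑ j ∈ range (n + 1),
          ((1 + a 0) * (Q j * (1 + f j)) + ((P j - Q j) - (P (j + 1) - Q (j + 1)))) := by
        rw [chainSum, chainSum, mul_sum, ← sum_add_distrib]
        exact sum_congr rfl fun j _ ↦ hterm j
    _ = (1 + a 0) * chainSum n f (fun k ↦ a (k + 1))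
          + ((P 0 - Q 0) - (P (n + 1) - Q (n + 1))) := by
        rw [sum_add_distrib, ← mul_sum, sum_range_sub']
        rfl
    _ = (1 + a 0) * chainSum n f (fun k ↦ a (k + 1)) := by
        simp [hPQ_end, P, Q]

end ChainSum

section CyclicIndices

variable {n : ℕ} {K : Type*} [Field K] (α φ : ZMod (2 * n + 2) → K)

theorem Sev_eq_chainSum (x : ZMod (2 * n + 2)) :
    Sev n α φ x
      = chainSum n (fun j ↦ α (x + 2 * j) / φ (x + 2 * j)) (fun j ↦ φ (x + 2 * j + 1)) :=
  rfl

theorem Sod_eq_chainSum (x : ZMod (2 * n + 2)) :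
    Sod n α φ x
      = chainSum n (fun j ↦ φ (x + 2 * j)) (fun j ↦ α (x + 2 * j + 1) / φ (x + 2 * j + 1)) :=
  rfl

theorem two_mul_natCast_succ_eq_zero :
    (2 : ZMod (2 * n + 2)) * ((n + 1 : ℕ) : ZMod (2 * n + 2)) = 0 := by
  have h := ZMod.natCast_self (2 * n + 2)
  push_cast at h ⊢
  linear_combination h

end CyclicIndices

theorem stmt0_general (n : ℕ) (K : Type*) [Field K]
    (α φ : ZMod (2*n+2) → K) :
    ∀ i : ℕ, i ≤ n →
      Sev n α φ (2*i) + φ (2*i+1) * Sev n α φ (2*i+2)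
        = (1 + α (2*i) / φ (2*i)) * Sod n α φ (2*i+1) := by
  intro i _
  set x : ZMod (2 * n + 2) := 2 * i
  set a : ℕ → K := fun j ↦ α (x + 2 * j) / φ (x + 2 * j)
  set f : ℕ → K := fun j ↦ φ (x + 2 * j + 1)
  have ha : a (n + 1) = a 0 := by
    simp only [a, two_mul_natCast_succ_eq_zero, add_zero, Nat.cast_zero, mul_zero]
  have hshift (j : ℕ) :
      x + 2 + 2 * (j : ZMod (2 * n + 2)) = x + 2 * ((j + 1 : ℕ) : ZMod _) := by
    push_cast; ring
  have hSev_shift :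
      Sev n α φ (x + 2) = chainSum n (fun k ↦ a (k + 1)) (fun k ↦ f (k + 1)) := by
    simp only [Sev_eq_chainSum, hshift, a, f]
  have hSod : Sod n α φ (x + 1) = chainSum n f (fun k ↦ a (k + 1)) := by
    simp only [Sod_eq_chainSum, a, f, ← hshift]
    congr! 3 <;> ring_nf
  rw [Sev_eq_chainSum, hSev_shift, hSod]
  simpa [a, f] using chainSum_add_mul_chainSum_succ n a f ha

/-- `S_{2i} + φ_{2i+1} S_{2i+2} = (1 + α_{2i}/φ_{2i}) S_{2i+1}` for `i = 0, …, n`. -/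
theorem stmt0 (n : ℕ) (hn : 1 ≤ n) (K : Type*) [Field K]
    (α φ : ZMod (2*n+2) → K) (hα : ∀ i, α i ≠ 0) (hφ : ∀ i, φ i ≠ 0) :
    ∀ i : ℕ, i ≤ n →
      Sev n α φ (2*i) + φ (2*i+1) * Sev n α φ (2*i+2)
        = (1 + α (2*i) / φ (2*i)) * Sod n α φ (2*i+1) :=
  stmt0_general n K α φ
end

section
/- For every j ∈ ℤ/(2n+2)ℤ, the map r_j is an involution: applying r_j twice to any tuple (α, φ) (with all nonvanishing conditions holding for the intermediate tuple) returns the original tuple, i.e. r_j ∘ r_j = id. -/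
/-!
`r_j` replaces `α_j` by `α_j⁻¹` and `φ_j` by `φ_j / α_j`, hence inverts the ratio
`(α_j + φ_j) / (1 + φ_j)`. Every other coordinate is multiplied by powers of `α_j` and of
that ratio, so the second application multiplies by the inverse powers and undoes the first.
-/

/-- The Cartan matrix of type `A_{2n+1}^{(1)}`, with rows and columns indexed by
`ZMod (2n+2)`. -/
def cartan (n : ℕ) (i j : ZMod (2*n+2)) : ℤ :=
  if i = j then 2 else if i = j + 1 ∨ j = i + 1 then -1 else 0

/-- The `α`-component of the simple reflection `r_j`:
`r_j(α)_i = α_i α_j^{-a_{j,i}}`. -/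
noncomputable def rα (n : ℕ) {K : Type*} [Field K] (j : ZMod (2*n+2))
    (α : ZMod (2*n+2) → K) : ZMod (2*n+2) → K :=
  fun i => α i * α j ^ (-(cartan n j i))

/-- The `φ`-component of the simple reflection `r_j`:
`r_j(φ)_i = φ_i α_j^{-δ_{i,j}+δ_{i,j+1}} ((α_j+φ_j)/(1+φ_j))^{δ_{i,j-1}-δ_{i,j+1}}`. -/
noncomputable def rφ (n : ℕ) {K : Type*} [Field K] (j : ZMod (2*n+2))
    (α φ : ZMod (2*n+2) → K) : ZMod (2*n+2) → K :=
  fun i => φ i * α j ^ (((if i = j + 1 then 1 else 0) : ℤ) - ((if i = j then 1 else 0) : ℤ))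
    * ((α j + φ j) / (1 + φ j))
        ^ (((if i = j - 1 then 1 else 0) : ℤ) - ((if i = j + 1 then 1 else 0) : ℤ))

/-- The nonvanishing conditions on a tuple `(α, φ)`:
`α_i ≠ 0`, `φ_i ≠ 0`, `1 + φ_i ≠ 0` and `α_i + φ_i ≠ 0` for all `i`. -/
def Good (n : ℕ) {K : Type*} [Field K] (α φ : ZMod (2*n+2) → K) : Prop :=
  ∀ i, α i ≠ 0 ∧ φ i ≠ 0 ∧ 1 + φ i ≠ 0 ∧ α i + φ i ≠ 0

instance ZMod.nontrivial_two_mul_add_two (n : ℕ) : Nontrivial (ZMod (2*n+2)) :=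
  ZMod.nontrivial_iff.mpr (by omega)

theorem cartan_self (n : ℕ) (j : ZMod (2*n+2)) : cartan n j j = 2 := if_pos rfl

theorem inv_add_div_div_one_add_div {F : Type*} [Field F] {a : F} (ha : a ≠ 0) (p : F) :
    (a⁻¹ + p / a) / (1 + p / a) = ((a + p) / (1 + p))⁻¹ := by
  rw [inv_div, inv_eq_one_div, ← add_div, one_add_div ha, div_div_div_cancel_right₀ ha]

section Reflection

variable {n : ℕ} {K : Type*} [Field K] {j : ZMod (2*n+2)} {α φ : ZMod (2*n+2) → K}

theorem rα_self (hα : α j ≠ 0) : rα n j α j = (α j)⁻¹ := by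
  rw [rα, cartan_self, zpow_neg, zpow_two, mul_inv, ← mul_assoc, mul_inv_cancel₀ hα, one_mul]

theorem rφ_self : rφ n j α φ j = φ j / α j := by
  have hsucc : j ≠ j + 1 := by simp
  have hpred : j ≠ j - 1 := fun h => one_ne_zero (sub_eq_self.mp h.symm)
  simp [rφ, hsucc, hpred, div_eq_mul_inv]

theorem rα_rα (hα : α j ≠ 0) : rα n j (rα n j α) = α := by
  funext i
  rw [rα, rα_self hα, rα, inv_zpow, mul_inv_cancel_right₀ (zpow_ne_zero _ hα)]

theorem rφ_rφ (hα : α j ≠ 0) (h1φ : 1 + φ j ≠ 0) (hαφ : α j + φ j ≠ 0) :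
    rφ n j (rα n j α) (rφ n j α φ) = φ := by
  funext i
  rw [rφ, rα_self hα, rφ_self, inv_add_div_div_one_add_div hα, rφ, inv_zpow, inv_zpow,
    mul_right_comm _ _ (α j ^ _)⁻¹, mul_inv_cancel_right₀ (zpow_ne_zero _ (div_ne_zero hαφ h1φ)),
    mul_inv_cancel_right₀ (zpow_ne_zero _ hα)]

end Reflection

theorem stmt8_general (n : ℕ) (K : Type*) [Field K]
    (α φ : ZMod (2*n+2) → K) (h : Good n α φ) :
    ∀ j : ZMod (2*n+2),
      Good n (rα n j α) (rφ n j α φ) →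
      rα n j (rα n j α) = α ∧ rφ n j (rα n j α) (rφ n j α φ) = φ := by
  intro j _
  obtain ⟨hα, -, h1φ, hαφ⟩ := h j
  exact ⟨rα_rα hα, rφ_rφ hα h1φ hαφ⟩

/-- each `r_j` is an involution on tuples `(α, φ)`. -/
theorem stmt8 (n : ℕ) (hn : 1 ≤ n) (K : Type*) [Field K]
    (α φ : ZMod (2*n+2) → K) (h : Good n α φ) :
    ∀ j : ZMod (2*n+2),
      Good n (rα n j α) (rφ n j α φ) →
      rα n j (rα n j α) = α ∧ rφ n j (rα n j α) (rφ n j α φ) = φ :=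
  stmt8_general n K α φ h
end

section
/- For all i, j ∈ ℤ/(2n+2)ℤ with a_{i,j} = 0 (i.e. i ≢ j and i ≢ j ± 1 modulo 2n+2), the maps r_i and r_j commute: r_i ∘ r_j = r_j ∘ r_i on tuples (α, φ). -/
section NonAdjacent

variable {n : ℕ} {K : Type*} [Field K] {i j : ZMod (2*n+2)}

lemma cartan_eq_zero (hij : i ≠ j) (hij₁ : i ≠ j + 1) (hji₁ : j ≠ i + 1) : cartan n i j = 0 := by
  simp [cartan, hij, hij₁, hji₁]

lemma rα_apply_of_cartan_eq_zero (α : ZMod (2*n+2) → K) (h : cartan n j i = 0) :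
    rα n j α i = α i := by
  simp [rα, h]

lemma rφ_apply (α φ : ZMod (2*n+2) → K) (k : ZMod (2*n+2)) :
    rφ n j α φ k = φ k * α j ^ (((if k = j + 1 then 1 else 0) : ℤ) - ((if k = j then 1 else 0) : ℤ))
      * ((α j + φ j) / (1 + φ j))
        ^ (((if k = j - 1 then 1 else 0) : ℤ) - ((if k = j + 1 then 1 else 0) : ℤ)) :=
  rfl

lemma rφ_apply_of_ne (α φ : ZMod (2*n+2) → K) (hij : i ≠ j) (hij₁ : i ≠ j + 1)
    (hij_sub : i ≠ j - 1) : rφ n j α φ i = φ i := by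
  simp [rφ, hij, hij₁, hij_sub]

theorem rα_comm (α : ZMod (2*n+2) → K) (hcij : cartan n i j = 0) (hcji : cartan n j i = 0) :
    rα n i (rα n j α) = rα n j (rα n i α) := by
  funext k
  simp only [rα, hcij, hcji, neg_zero, zpow_zero, mul_one]
  ring

theorem rφ_comm (α φ : ZMod (2*n+2) → K) (hij : i ≠ j) (hij₁ : i ≠ j + 1) (hji₁ : j ≠ i + 1) :
    rφ n i (rα n j α) (rφ n j α φ) = rφ n j (rα n i α) (rφ n i α φ) := by
  have hij_sub : i ≠ j - 1 := fun h => hji₁ (by rw [h, sub_add_cancel])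
  have hji_sub : j ≠ i - 1 := fun h => hij₁ (by rw [h, sub_add_cancel])
  funext k
  rw [rφ_apply (α := rα n j α), rφ_apply (α := rα n i α),
    rα_apply_of_cartan_eq_zero α (cartan_eq_zero hij.symm hji₁ hij₁),
    rα_apply_of_cartan_eq_zero α (cartan_eq_zero hij hij₁ hji₁),
    rφ_apply_of_ne α φ hij hij₁ hij_sub, rφ_apply_of_ne α φ hij.symm hji₁ hji_sub]
  simp only [rφ_apply]
  ring

end NonAdjacent

theorem stmt10_general (n : ℕ) (K : Type*) [Field K]
    (α φ : ZMod (2*n+2) → K) :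
    ∀ i j : ZMod (2*n+2), i ≠ j → i ≠ j + 1 → j ≠ i + 1 →
      Good n (rα n j α) (rφ n j α φ) →
      Good n (rα n i α) (rφ n i α φ) →
      rα n i (rα n j α) = rα n j (rα n i α)
      ∧ rφ n i (rα n j α) (rφ n j α φ) = rφ n j (rα n i α) (rφ n i α φ) := by
  intro i j hij hij₁ hji₁ _ _
  exact ⟨rα_comm α (cartan_eq_zero hij hij₁ hji₁) (cartan_eq_zero hij.symm hji₁ hij₁),
    rφ_comm α φ hij hij₁ hji₁⟩

/-- the commuting relation `r_i r_j = r_j r_i` in the case `a_{i,j} = 0`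
(i.e. `i ≠ j`, `i ≠ j ± 1` modulo `2n+2`) on tuples `(α, φ)`. -/
theorem stmt10 (n : ℕ) (hn : 1 ≤ n) (K : Type*) [Field K]
    (α φ : ZMod (2*n+2) → K) (h : Good n α φ) :
    ∀ i j : ZMod (2*n+2), i ≠ j → i ≠ j + 1 → j ≠ i + 1 →
      Good n (rα n j α) (rφ n j α φ) →
      Good n (rα n i α) (rφ n i α φ) →
      rα n i (rα n j α) = rα n j (rα n i α)
      ∧ rφ n i (rα n j α) (rφ n j α φ) = rφ n j (rα n i α) (rφ n i α φ) :=
  stmt10_general n K α φ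
end

section
/- The map s₁ is an involution: applying s₁ twice to any tuple (α, φ) (with the nonvanishing of all sums S occurring in denominators, both for the original and the transformed tuple) returns the original tuple, i.e. s₁ ∘ s₁ = id. -/
/-!
Encode `(α, φ)` by the single cyclic sequence of weights `w_i = α_i / φ_i` for even `i` and
`w_i = φ_i` for odd `i`. Then `S_x = ∑_{m < N} w_x w_{x+1} ⋯ w_{x+m-1}` (with `N = 2n + 2`) for
both parities of `x`, and `s₁` becomes the parity-free map `w'_x = S_x / (w_{x+1} S_{x+2})`.
With `A = ∏ w_i`, shifting the cyclic sum gives `S_x = 1 + w_x S_{x+1} - A`. If `A = 1` this says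
`S_x = w_x S_{x+1}`, so `w' = w`. Otherwise the partial products of `w'` are ratios of products
of `S`'s, the sum `S'_x` telescopes to `A S'_x = w_x S_{x+1}`, and substituting this into the
definition of `w''` returns `w`.
-/

open Finset

/-- `S'_x` (the same formula covers both even and odd indices `x` of `ZMod (2n+2)`). -/
noncomputable def Sp (n : ℕ) {K : Type*} [Field K] (α φ : ZMod (2*n+2) → K)
    (x : ZMod (2*n+2)) : K :=
  ∑ j ∈ range (n+1),
    (∏ k ∈ range j, (φ (x + 2*k) / α (x + 2*k)) * (φ (x + 2*k + 1) / α (x + 2*k + 1)))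
      * (1 + φ (x + 2*j) / α (x + 2*j))

/-- The `φ`-component of the map `s₁` (the `α`-component is the identity):
`s₁(φ)_{2i} = α_{2i} φ_{2i+1} S_{2i+2}/S_{2i}` and
`s₁(φ)_{2i+1} = (φ_{2i+2}/α_{2i+2}) S_{2i+1}/S_{2i+3}`; since the modulus `2n+2`
is even, the parity of an index `x : ZMod (2n+2)` is detected by `x.val`. -/
noncomputable def s1φ (n : ℕ) {K : Type*} [Field K] (α φ : ZMod (2*n+2) → K)
    (x : ZMod (2*n+2)) : K :=
  if Even x.val then α x * φ (x+1) * Sev n α φ (x+2) / Sev n α φ x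
  else (φ (x+1) / α (x+1)) * Sod n α φ x / Sod n α φ (x+2)

/-- The `φ`-component of the map `s'₁` (the `α`-component is the identity):
`s'₁(φ)_{2i} = (α_{2i} α_{2i+1}/φ_{2i+1}) S'_{2i}/S'_{2i+2}` and
`s'₁(φ)_{2i+1} = (α_{2i+1} α_{2i+2}/φ_{2i+2}) S'_{2i+1}/S'_{2i+3}`;
both cases are given by one and the same formula in the index `x`. -/
noncomputable def s1'φ (n : ℕ) {K : Type*} [Field K] (α φ : ZMod (2*n+2) → K)
    (x : ZMod (2*n+2)) : K :=
  (α x * α (x+1) / φ (x+1)) * Sp n α φ x / Sp n α φ (x+2)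

section CyclicWeights

@[to_additive]
theorem prod_range_double {M : Type*} [CommMonoid M] (f : ℕ → M) (k : ℕ) :
    ∏ m ∈ range (2 * k), f m = ∏ j ∈ range k, f (2 * j) * f (2 * j + 1) := by
  induction k with
  | zero => simp
  | succ k ih => rw [Nat.mul_succ, prod_range_succ, prod_range_succ, ih, prod_range_succ, mul_assoc]

theorem prod_range_add_natCast {N : ℕ} [NeZero N] {M : Type*} [CommMonoid M]
    (f : ZMod N → M) (x : ZMod N) : ∏ l ∈ range N, f (x + l) = ∏ i, f i := by
  refine prod_nbij (fun l : ℕ => x + l) (fun _ _ => mem_univ _) ?_ ?_ (fun _ _ => rfl)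
  · intro a ha b hb hab
    have h : (a : ZMod N) = b := add_left_cancel hab
    rwa [ZMod.natCast_eq_natCast_iff', Nat.mod_eq_of_lt (mem_range.mp ha),
      Nat.mod_eq_of_lt (mem_range.mp hb)] at h
  · exact fun y _ => ⟨(y - x).val, mem_range.mpr (ZMod.val_lt _), by simp⟩

variable {N : ℕ} {K : Type*} [Field K] (w : ZMod N → K)

def cyclicSum (x : ZMod N) : K :=
  ∑ m ∈ range N, ∏ l ∈ range m, w (x + l)

def cyclicTransform (x : ZMod N) : K :=
  cyclicSum w x / (w (x + 1) * cyclicSum w (x + 2))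

variable {w}

theorem prod_cyclicTransform (hw : ∀ i, w i ≠ 0) (hS : ∀ i, cyclicSum w i ≠ 0)
    (x : ZMod N) (m : ℕ) :
    ∏ l ∈ range m, cyclicTransform w (x + l) = cyclicSum w x * cyclicSum w (x + 1) /
      (cyclicSum w (x + m) * cyclicSum w (x + m + 1) * ∏ l ∈ range m, w (x + 1 + l)) := by
  induction m with
  | zero => simp [div_self, hS]
  | succ m ih =>
    have hx : x + ((m + 1 : ℕ) : ZMod N) = x + m + 1 := by push_cast; ring
    have hx1 : x + 1 + (m : ZMod N) = x + m + 1 := by ring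
    have hx2 : x + (m : ZMod N) + 2 = x + m + 1 + 1 := by ring
    rw [prod_range_succ, ih, prod_range_succ, hx, hx1, cyclicTransform, hx2]
    have := hS (x + m)
    have := hS (x + m + 1)
    have := hS (x + m + 1 + 1)
    have := hw (x + m + 1)
    have : ∏ l ∈ range m, w (x + 1 + l) ≠ 0 := prod_ne_zero_iff.mpr fun _ _ => hw _
    field_simp

variable [NeZero N]

variable (w) in
theorem cyclicSum_eq_one_add_mul_sub_prod (x : ZMod N) :
    cyclicSum w x = 1 + w x * cyclicSum w (x + 1) - ∏ i, w i := by
  set P : ℕ → K := fun m => ∏ l ∈ range m, w (x + l)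
  have hshift : ∀ m, w x * ∏ l ∈ range m, w (x + 1 + l) = P (m + 1) := by
    intro m
    simp only [P, prod_range_succ', Nat.cast_zero, add_zero, Nat.cast_succ, mul_comm (w x)]
    exact congrArg (· * w x) (prod_congr rfl fun l _ => by ring_nf)
  have hP0 : P 0 = 1 := prod_range_zero _
  have hPN : P N = ∏ i, w i := prod_range_add_natCast w x
  change ∑ m ∈ range N, P m = 1 + w x * ∑ m ∈ range N, ∏ l ∈ range m, w (x + 1 + l) - _
  rw [mul_sum]
  simp only [hshift]
  linear_combination sum_range_succ' P N - sum_range_succ P N + hP0 - hPN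

theorem cyclicTransform_eq_self_of_prod_eq_one (hA : ∏ i, w i = 1)
    (hS : ∀ i, cyclicSum w i ≠ 0) :
    cyclicTransform w = w := by
  funext x
  have h0 := cyclicSum_eq_one_add_mul_sub_prod w x
  have h1 := cyclicSum_eq_one_add_mul_sub_prod w (x + 1)
  rw [hA, add_sub_cancel_left] at h0 h1
  rw [cyclicTransform, ← one_add_one_eq_two, ← add_assoc, ← h1, h0, mul_div_assoc,
    div_self (hS _), mul_one]

theorem cyclicSum_cyclicTransform (hw : ∀ i, w i ≠ 0) (hS : ∀ i, cyclicSum w i ≠ 0)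
    (hA : ∏ i, w i ≠ 1) (x : ZMod N) :
    cyclicSum (cyclicTransform w) x = w x * cyclicSum w (x + 1) / ∏ i, w i := by
  have hA0 : ∏ i, w i ≠ 0 := prod_ne_zero_iff.mpr fun _ _ => hw _
  have hP : ∀ m, ∏ l ∈ range m, w (x + 1 + l) ≠ 0 := fun _ =>
    prod_ne_zero_iff.mpr fun _ _ => hw _
  -- by `cyclicSum_eq_one_add_mul_sub_prod` at `x + m`, `G (m + 1) - G m` is `A (1 - A)`
  -- (with `A = ∏ i, w i`) times the `m`-th summand of `cyclicSum (cyclicTransform w) x`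
  set G : ℕ → K := fun m => (∏ i, w i) * cyclicSum w x * cyclicSum w (x + 1) * w (x + m) /
    ((∏ l ∈ range m, w (x + 1 + l)) * cyclicSum w (x + m))
  have hstep : ∀ m ∈ range N, (∏ i, w i) * (1 - ∏ i, w i) *
      ∏ l ∈ range m, cyclicTransform w (x + l) = G (m + 1) - G m := by
    intro m _
    have hrec := cyclicSum_eq_one_add_mul_sub_prod w (x + m)
    have hx : x + ((m + 1 : ℕ) : ZMod N) = x + m + 1 := by push_cast; ring
    have hx1 : x + 1 + (m : ZMod N) = x + m + 1 := by ring
    have := hS (x + m)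
    have := hS (x + m + 1)
    have := hw (x + m + 1)
    have := hP m
    rw [prod_cyclicTransform hw hS]
    simp only [G]
    rw [prod_range_succ, hx, hx1]
    field_simp
    linear_combination (-(cyclicSum w x * cyclicSum w (x + 1))) * hrec
  have hGN : G N = w x * cyclicSum w (x + 1) := by
    have := hS x
    simp only [G]
    rw [prod_range_add_natCast w (x + 1), ZMod.natCast_self, add_zero]
    field_simp
  have hG0 : G 0 = (∏ i, w i) * (w x * cyclicSum w (x + 1)) := by
    have := hS x
    simp only [G, prod_range_zero, Nat.cast_zero, add_zero]
    field_simp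
  have hsum : (1 - ∏ i, w i) * ((∏ i, w i) * cyclicSum (cyclicTransform w) x)
      = (1 - ∏ i, w i) * (w x * cyclicSum w (x + 1)) := by
    rw [← mul_assoc, mul_comm (1 - _), cyclicSum, mul_sum, sum_congr rfl hstep, sum_range_sub,
      hGN, hG0]
    ring
  rw [eq_div_iff hA0, mul_comm]
  exact mul_left_cancel₀ (sub_ne_zero.mpr (Ne.symm hA)) hsum

theorem cyclicTransform_cyclicTransform (hw : ∀ i, w i ≠ 0) (hS : ∀ i, cyclicSum w i ≠ 0) :
    cyclicTransform (cyclicTransform w) = w := by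
  by_cases hA : ∏ i, w i = 1
  · rw [cyclicTransform_eq_self_of_prod_eq_one hA hS,
      cyclicTransform_eq_self_of_prod_eq_one hA hS]
  funext x
  have hx1 : x + 1 + 1 = x + 2 := by ring
  have hx2 : x + 2 + 1 = x + 1 + 2 := by ring
  have : ∏ i, w i ≠ 0 := prod_ne_zero_iff.mpr fun _ _ => hw _
  have := hS (x + 1)
  have := hS (x + 1 + 2)
  have := hw (x + 2)
  rw [cyclicTransform, cyclicTransform, cyclicSum_cyclicTransform hw hS hA,
    cyclicSum_cyclicTransform hw hS hA, hx1, hx2]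
  field_simp

end CyclicWeights

section ParityWeight

variable {n : ℕ} {K : Type*} [Field K]

theorem even_val_add_natCast (x : ZMod (2*n+2)) (c : ℕ) :
    Even (x + c).val ↔ (Even x.val ↔ Even c) := by
  have h2 : 2 ∣ 2*n+2 := ⟨n+1, by ring⟩
  have hpar : ∀ y : ZMod (2*n+2), Even y.val ↔ ZMod.castHom h2 (ZMod 2) y = 0 := fun y => by
    rw [ZMod.castHom_apply, ZMod.cast_eq_val, ZMod.natCast_eq_zero_iff_even]
  rw [hpar, hpar, map_add, map_natCast, ← ZMod.natCast_eq_zero_iff_even]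
  generalize ZMod.castHom h2 (ZMod 2) x = a
  generalize (c : ZMod 2) = b
  revert a b
  decide

theorem even_val_add_one (x : ZMod (2*n+2)) : Even (x + 1).val ↔ ¬ Even x.val := by
  simpa using even_val_add_natCast x 1

theorem even_val_add_two (x : ZMod (2*n+2)) : Even (x + 2).val ↔ Even x.val := by
  simpa using even_val_add_natCast x 2

theorem even_val_add_two_mul (x : ZMod (2*n+2)) (k : ℕ) :
    Even (x + 2 * k).val ↔ Even x.val := by
  simpa using even_val_add_natCast x (2 * k)

def parityWeight (α φ : ZMod (2*n+2) → K) (x : ZMod (2*n+2)) : K :=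
  if Even x.val then α x / φ x else φ x

theorem cyclicSum_eq_sum_pairs (w : ZMod (2*n+2) → K) (x : ZMod (2*n+2)) :
    cyclicSum w x = ∑ j ∈ range (n+1),
      (∏ k ∈ range j, w (x + 2*k) * w (x + 2*k + 1)) * (1 + w (x + 2*j)) := by
  rw [cyclicSum, show range (2*n+2) = range (2*(n+1)) from rfl, sum_range_double]
  refine sum_congr rfl fun j _ => ?_
  rw [prod_range_succ, prod_range_double]
  push_cast
  ring_nf

variable (α φ : ZMod (2*n+2) → K)

theorem cyclicSum_parityWeight_of_even {x : ZMod (2*n+2)} (hx : Even x.val) :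
    cyclicSum (parityWeight α φ) x = Sev n α φ x := by
  have h0 : ∀ k : ℕ, parityWeight α φ (x + 2*k) = α (x + 2*k) / φ (x + 2*k) := fun k =>
    if_pos ((even_val_add_two_mul x k).mpr hx)
  have h1 : ∀ k : ℕ, parityWeight α φ (x + 2*k + 1) = φ (x + 2*k + 1) := fun k =>
    if_neg (by rw [even_val_add_one, even_val_add_two_mul]; exact not_not.mpr hx)
  simp only [cyclicSum_eq_sum_pairs, Sev, h0, h1]

theorem cyclicSum_parityWeight_of_odd {x : ZMod (2*n+2)} (hx : ¬ Even x.val) :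
    cyclicSum (parityWeight α φ) x = Sod n α φ x := by
  have h0 : ∀ k : ℕ, parityWeight α φ (x + 2*k) = φ (x + 2*k) := fun k =>
    if_neg (by rwa [even_val_add_two_mul])
  have h1 : ∀ k : ℕ, parityWeight α φ (x + 2*k + 1) = α (x + 2*k + 1) / φ (x + 2*k + 1) :=
    fun k => if_pos (by rwa [even_val_add_one, even_val_add_two_mul])
  simp only [cyclicSum_eq_sum_pairs, Sod, h0, h1]

theorem parityWeight_s1φ (hα : ∀ i, α i ≠ 0) :
    parityWeight α (s1φ n α φ) = cyclicTransform (parityWeight α φ) := by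
  funext x
  by_cases hx : Even x.val
  · have hx1 : ¬ Even (x + 1).val := (even_val_add_one x).not.mpr (not_not.mpr hx)
    rw [parityWeight, if_pos hx, s1φ, if_pos hx, cyclicTransform,
      cyclicSum_parityWeight_of_even α φ hx, parityWeight, if_neg hx1,
      cyclicSum_parityWeight_of_even α φ ((even_val_add_two x).mpr hx),
      div_div_eq_mul_div, mul_assoc, mul_div_mul_left _ _ (hα x)]
  · have hx1 : Even (x + 1).val := (even_val_add_one x).mpr hx
    rw [parityWeight, if_neg hx, s1φ, if_neg hx, cyclicTransform,
      cyclicSum_parityWeight_of_odd α φ hx, parityWeight, if_pos hx1,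
      cyclicSum_parityWeight_of_odd α φ ((even_val_add_two x).not.mpr hx)]
    simp only [div_eq_mul_inv, mul_inv, inv_inv]
    ring

variable {α φ}

theorem parityWeight_ne_zero (hα : ∀ i, α i ≠ 0) (hφ : ∀ i, φ i ≠ 0) (x : ZMod (2*n+2)) :
    parityWeight α φ x ≠ 0 := by
  unfold parityWeight
  split_ifs
  · exact div_ne_zero (hα x) (hφ x)
  · exact hφ x

theorem eq_of_parityWeight_eq {ψ : ZMod (2*n+2) → K} (hα : ∀ i, α i ≠ 0)
    (h : parityWeight α φ = parityWeight α ψ) : φ = ψ := by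
  funext x
  have hx := congrFun h x
  unfold parityWeight at hx
  split_ifs at hx
  · simpa [div_eq_mul_inv, hα x] using hx
  · exact hx

end ParityWeight

theorem stmt11_general (n : ℕ) (K : Type*) [Field K]
    (α φ : ZMod (2*n+2) → K) (hα : ∀ i, α i ≠ 0) (hφ : ∀ i, φ i ≠ 0)
    (hSe : ∀ x, Sev n α φ x ≠ 0) (hSo : ∀ x, Sod n α φ x ≠ 0) :
    ∀ x : ZMod (2*n+2), s1φ n α (s1φ n α φ) x = φ x := by
  have hS : ∀ x, cyclicSum (parityWeight α φ) x ≠ 0 := fun x => by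
    by_cases hx : Even x.val
    · rw [cyclicSum_parityWeight_of_even α φ hx]; exact hSe x
    · rw [cyclicSum_parityWeight_of_odd α φ hx]; exact hSo x
  have h : parityWeight α (s1φ n α (s1φ n α φ)) = parityWeight α φ := by
    rw [parityWeight_s1φ _ _ hα, parityWeight_s1φ _ _ hα,
      cyclicTransform_cyclicTransform (parityWeight_ne_zero hα hφ) hS]
  exact congrFun (eq_of_parityWeight_eq hα h)

/-- `s₁` is an involution (the `α`-component of `s₁` is the identity,
so the content is that applying the `φ`-component twice returns `φ`). -/
theorem stmt11 (n : ℕ) (hn : 1 ≤ n) (K : Type*) [Field K]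
    (α φ : ZMod (2*n+2) → K) (hα : ∀ i, α i ≠ 0) (hφ : ∀ i, φ i ≠ 0)
    (hSe : ∀ x, Sev n α φ x ≠ 0) (hSo : ∀ x, Sod n α φ x ≠ 0)
    (hSe1 : ∀ x, Sev n α (s1φ n α φ) x ≠ 0)
    (hSo1 : ∀ x, Sod n α (s1φ n α φ) x ≠ 0) :
    ∀ x : ZMod (2*n+2), s1φ n α (s1φ n α φ) x = φ x :=
  stmt11_general n K α φ hα hφ hSe hSo
end

section
/- With φ defined from (b, g, f, t) as in the context, one has Ŝ'_{2i} = (b_i − g_i) F_i / (t b_i f_i) for every i = 1, …, n, and Ŝ'_{2n+2} = (b_0 − g_0) F_{n+1} / (t b_0). -/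
/-!
With `u = potential b g f`, i.e. `u k = b k f k / (b k - g k)`, one has
`1 / (φ_{2k} φ_{2k+1}) = u (k+1) / u k` for `k < n`, `1 / (φ_{2n} φ_{2n+1}) = u 0 / (t u n)` and
`1 + 1 / φ_{2j} = f j / u j`: going once around the cycle of indices the products telescope to a
single factor `1 / t`. Hence every summand of `Ŝ'_{2i}` is `f j / u i` or `f j / (t u i)`, and
the sums collapse to `F i / (t u i)`.
-/

open Finset

section Telescoping

variable {K : Type*} [Field K] {a u : ℕ → K}

theorem prod_Ico_mul_eq_of_ratio {m n : ℕ} (hmn : m ≤ n) (hu : ∀ k ∈ Ico m n, u k ≠ 0)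
    (ha : ∀ k ∈ Ico m n, a k = u (k + 1) / u k) :
    (∏ k ∈ Ico m n, a k) * u m = u n := by
  induction n, hmn using Nat.le_induction with
  | base => simp
  | succ n hmn ih =>
    have hn : n ∈ Ico m (n + 1) := mem_Ico.2 ⟨hmn, n.lt_succ_self⟩
    have hsub : ∀ k ∈ Ico m n, k ∈ Ico m (n + 1) := fun k hk =>
      Ico_subset_Ico_right n.le_succ hk
    rw [prod_Ico_succ_top hmn, mul_right_comm, ih (fun k hk => hu k (hsub k hk))
      (fun k hk => ha k (hsub k hk)), ha n hn, mul_div_cancel₀ _ (hu n hn)]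

theorem prod_Ico_mul_div_eq_of_ratio {m n : ℕ} (hmn : m ≤ n) (hu : ∀ k ∈ Icc m n, u k ≠ 0)
    (ha : ∀ k ∈ Ico m n, a k = u (k + 1) / u k) (x : K) :
    (∏ k ∈ Ico m n, a k) * (x / u n) = x / u m := by
  have hm : u m ≠ 0 := hu m (left_mem_Icc.2 hmn)
  have hn : u n ≠ 0 := hu n (right_mem_Icc.2 hmn)
  have h := prod_Ico_mul_eq_of_ratio hmn (fun k hk => hu k (Ico_subset_Icc_self hk)) ha
  rw [eq_div_iff hm]
  calc (∏ k ∈ Ico m n, a k) * (x / u n) * u m = (∏ k ∈ Ico m n, a k) * u m * x / u n := by ring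
    _ = x := by rw [h, mul_div_cancel_left₀ x hn]

end Telescoping

section CyclicTelescoping

variable {K : Type*} [Field K] {a c f u : ℕ → K} {t : K} {n : ℕ}

theorem prod_Icc_eq_of_cyclic_ratio {i : ℕ} (hin : i ≤ n) (hu : ∀ k ≤ n, u k ≠ 0)
    (ha : ∀ k < n, a k = u (k + 1) / u k) (ha_last : a n = u 0 / (t * u n)) :
    ∏ k ∈ Icc i n, a k = u 0 / (t * u i) := by
  rw [← Ico_add_one_right_eq_Icc, prod_Ico_succ_top hin, ha_last, ← div_div,
    prod_Ico_mul_div_eq_of_ratio hin (fun k hk => hu k (mem_Icc.1 hk).2)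
      (fun k hk => ha k (mem_Ico.1 hk).2), div_div]

theorem prod_Ico_mul_eq_div_of_ratio {i j : ℕ} (hij : i ≤ j) (hjn : j ≤ n)
    (hu : ∀ k ≤ n, u k ≠ 0) (ha : ∀ k < n, a k = u (k + 1) / u k)
    (hc : ∀ j ≤ n, c j = f j / u j) :
    (∏ k ∈ Ico i j, a k) * c j = f j / u i := by
  rw [hc j hjn, prod_Ico_mul_div_eq_of_ratio hij (fun k hk => hu k ((mem_Icc.1 hk).2.trans hjn))
    (fun k hk => ha k ((mem_Ico.1 hk).2.trans_le hjn))]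

theorem cyclic_sum_eq_div (hu : ∀ k ≤ n, u k ≠ 0) (ht : t ≠ 0)
    (ha : ∀ k < n, a k = u (k + 1) / u k) (ha_last : a n = u 0 / (t * u n))
    (hc : ∀ j ≤ n, c j = f j / u j) {i : ℕ} (hin : i ≤ n) :
    (∑ j ∈ Icc i n, (∏ k ∈ Ico i j, a k) * c j)
        + (∏ k ∈ Icc i n, a k) * c 0
        + ∑ j ∈ Ico 1 i, (∏ k ∈ Icc i n, a k) * (∏ k ∈ range j, a k) * c j
      = ((∑ j ∈ Ico 1 i, f j) + t * (∑ j ∈ Icc i n, f j) + f 0) / (t * u i) := by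
  have hui : u i ≠ 0 := hu i hin
  have hu0 : u 0 ≠ 0 := hu 0 n.zero_le
  have hforward : ∑ j ∈ Icc i n, (∏ k ∈ Ico i j, a k) * c j = (∑ j ∈ Icc i n, f j) / u i := by
    rw [sum_div]
    refine sum_congr rfl fun j hj => ?_
    exact prod_Ico_mul_eq_div_of_ratio (mem_Icc.1 hj).1 (mem_Icc.1 hj).2 hu ha hc
  have hwrapped : ∑ j ∈ Ico 1 i, (∏ k ∈ Icc i n, a k) * (∏ k ∈ range j, a k) * c j
      = (∑ j ∈ Ico 1 i, f j) / (t * u i) := by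
    rw [sum_div]
    refine sum_congr rfl fun j hj => ?_
    rw [mul_assoc, range_eq_Ico, prod_Ico_mul_eq_div_of_ratio j.zero_le
      ((mem_Ico.1 hj).2.le.trans hin) hu ha hc, prod_Icc_eq_of_cyclic_ratio hin hu ha ha_last]
    field_simp
  rw [hforward, hwrapped, prod_Icc_eq_of_cyclic_ratio hin hu ha ha_last, hc 0 n.zero_le]
  field_simp
  ring

theorem cyclic_sum_zero_eq_div (hu : ∀ k ≤ n, u k ≠ 0) (ha : ∀ k < n, a k = u (k + 1) / u k)
    (hc : ∀ j ≤ n, c j = f j / u j) :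
    c 0 + ∑ j ∈ Icc 1 n, (∏ k ∈ range j, a k) * c j = (f 0 + ∑ j ∈ Icc 1 n, f j) / u 0 := by
  rw [add_div, sum_div, hc 0 n.zero_le]
  congr 1
  refine sum_congr rfl fun j hj => ?_
  rw [range_eq_Ico, prod_Ico_mul_eq_div_of_ratio j.zero_le (mem_Icc.1 hj).2 hu ha hc]

end CyclicTelescoping

section Phi

variable {K : Type*} [Field K] {b g f φ : ℕ → K}

def potential (b g f : ℕ → K) (k : ℕ) : K := b k * f k / (b k - g k)

theorem potential_ne_zero {k : ℕ} (hb : b k ≠ 0) (hf : f k ≠ 0) (hbg : b k ≠ g k) :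
    potential b g f k ≠ 0 :=
  div_ne_zero (mul_ne_zero hb hf) (sub_ne_zero.2 hbg)

theorem div_mul_potential (x t : K) (k : ℕ) :
    x / (t * potential b g f k) = (b k - g k) * x / (t * b k * f k) := by
  rw [potential, mul_div_assoc', div_div_eq_mul_div]
  ring

theorem one_add_one_div_phi_even {j : ℕ} (hφ : φ (2 * j) = -b j / g j) (hb : b j ≠ 0)
    (hf : f j ≠ 0) : 1 + 1 / φ (2 * j) = f j / potential b g f j := by
  rw [hφ, potential]
  field_simp
  ring

theorem one_div_phi_pair {k : ℕ} (h0 : φ (2 * k) = -b k / g k)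
    (h1 : φ (2 * k + 1) =
      -(g k) * (b (k + 1) - g (k + 1)) * f k / (b (k + 1) * (b k - g k) * f (k + 1)))
    (hg : g k ≠ 0) :
    1 / (φ (2 * k) * φ (2 * k + 1)) = potential b g f (k + 1) / potential b g f k := by
  rw [h0, h1, potential, potential]
  simp only [div_eq_mul_inv, mul_inv, inv_inv, neg_mul, mul_neg, neg_neg]
  field_simp

theorem one_div_phi_pair_last {n : ℕ} (h0 : φ (2 * n) = -b n / g n)
    (h1 : φ (2 * n + 1) = -(g n) * (b 0 - g 0) * f n / (b 0 * (b n - g n)))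
    (hg : g n ≠ 0) (hf : f 0 ≠ 0) :
    1 / (φ (2 * n) * φ (2 * n + 1)) = potential b g f 0 / (f 0 * potential b g f n) := by
  rw [h0, h1, potential, potential]
  simp only [div_eq_mul_inv, mul_inv, inv_inv, neg_mul, mul_neg, neg_neg]
  field_simp

end Phi

theorem stmt16_general (n : ℕ) (K : Type*) [Field K]
    (t : K) (f b g φ : ℕ → K)
    (ht : t ≠ 0)
    (hf0 : f 0 = t)
    (hf : ∀ i, 1 ≤ i → i ≤ n → f i ≠ 0)
    (hb : ∀ i, i ≤ n → b i ≠ 0)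
    (hg : ∀ i, i ≤ n → g i ≠ 0)
    (hbg : ∀ i, i ≤ n → b i ≠ g i)
    (hφeven : ∀ i, i ≤ n → φ (2*i) = -(b i) / g i)
    (hφ1 : φ 1 = -(g 0) * (b 1 - g 1) * t / (b 1 * (b 0 - g 0) * f 1))
    (hφodd : ∀ i, 1 ≤ i → i ≤ n - 1 →
      φ (2*i+1) = -(g i) * (b (i+1) - g (i+1)) * f i / (b (i+1) * (b i - g i) * f (i+1)))
    (hφlast : φ (2*n+1) = -(g n) * (b 0 - g 0) * f n / (b 0 * (b n - g n)))
    (F : ℕ → K)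
    (hF : ∀ i, F i = (∑ j ∈ Ico 1 i, f j) + t * (∑ j ∈ Icc i n, f j) + t)
    (Sh : ℕ → K)
    (hSh : ∀ i, Sh i =
      (∑ j ∈ Icc i n, (∏ k ∈ Ico i j, 1 / (φ (2*k) * φ (2*k+1))) * (1 + 1 / φ (2*j)))
        + (∏ k ∈ Icc i n, 1 / (φ (2*k) * φ (2*k+1))) * (1 + 1 / φ 0)
        + ∑ j ∈ Ico 1 i, (∏ k ∈ Icc i n, 1 / (φ (2*k) * φ (2*k+1)))
            * (∏ k ∈ range j, 1 / (φ (2*k) * φ (2*k+1))) * (1 + 1 / φ (2*j)))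
    (Shlast : K)
    (hShlast : Shlast = (1 + 1 / φ 0)
        + ∑ j ∈ Icc 1 n, (∏ k ∈ range j, 1 / (φ (2*k) * φ (2*k+1))) * (1 + 1 / φ (2*j))) :
    (∀ i, 1 ≤ i → i ≤ n → Sh i = (b i - g i) * F i / (t * b i * f i))
    ∧ Shlast = (b 0 - g 0) * F (n+1) / (t * b 0) := by
  have hf' : ∀ i ≤ n, f i ≠ 0 := fun i hi => by
    rcases i with _ | i
    · exact hf0 ▸ ht
    · exact hf _ i.succ_pos hi
  have hu : ∀ k ≤ n, potential b g f k ≠ 0 := fun k hk =>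
    potential_ne_zero (hb k hk) (hf' k hk) (hbg k hk)
  have hφodd' : ∀ k < n,
      φ (2*k+1) = -(g k) * (b (k+1) - g (k+1)) * f k / (b (k+1) * (b k - g k) * f (k+1)) := by
    rintro (_ | k) hk
    · simpa [hf0] using hφ1
    · exact hφodd _ k.succ_pos (Nat.le_sub_one_of_lt hk)
  have ha : ∀ k < n, 1 / (φ (2*k) * φ (2*k+1)) = potential b g f (k+1) / potential b g f k :=
    fun k hk => one_div_phi_pair (hφeven k hk.le) (hφodd' k hk) (hg k hk.le)
  have ha_last := one_div_phi_pair_last (hφeven n le_rfl) hφlast (hg n le_rfl) (hf' 0 n.zero_le)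
  have hc : ∀ j ≤ n, 1 + 1 / φ (2*j) = f j / potential b g f j := fun j hj =>
    one_add_one_div_phi_even (hφeven j hj) (hb j hj) (hf' j hj)
  rw [hf0] at ha_last
  refine ⟨fun i _ hin => ?_, ?_⟩
  · rw [hSh i, cyclic_sum_eq_div hu ht ha ha_last hc hin, hF i, hf0, div_mul_potential]
  · have hempty : Icc (n+1) n = ∅ := Icc_eq_empty (by omega)
    rw [hShlast, cyclic_sum_zero_eq_div hu ha hc, hF (n+1), hempty, sum_empty,
      mul_zero, add_zero, Ico_add_one_right_eq_Icc, potential, hf0,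
      div_div_eq_mul_div]
    ring

/-- with `φ` defined from `(b, g, f, t)` as in the context,
`Ŝ'_{2i} = (b_i - g_i) F_i / (t b_i f_i)` for `i = 1, …, n` and
`Ŝ'_{2n+2} = (b_0 - g_0) F_{n+1} / (t b_0)`. -/
theorem stmt16 (n : ℕ) (hn : 1 ≤ n) (K : Type*) [Field K]
    (t : K) (f b g φ : ℕ → K)
    (ht : t ≠ 0)
    (hf0 : f 0 = t)
    (hf : ∀ i, 1 ≤ i → i ≤ n → f i ≠ 0)
    (hb : ∀ i, i ≤ n → b i ≠ 0)
    (hg : ∀ i, i ≤ n → g i ≠ 0)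
    (hbg : ∀ i, i ≤ n → b i ≠ g i)
    (hφeven : ∀ i, i ≤ n → φ (2*i) = -(b i) / g i)
    (hφ1 : φ 1 = -(g 0) * (b 1 - g 1) * t / (b 1 * (b 0 - g 0) * f 1))
    (hφodd : ∀ i, 1 ≤ i → i ≤ n - 1 →
      φ (2*i+1) = -(g i) * (b (i+1) - g (i+1)) * f i / (b (i+1) * (b i - g i) * f (i+1)))
    (hφlast : φ (2*n+1) = -(g n) * (b 0 - g 0) * f n / (b 0 * (b n - g n)))
    (F : ℕ → K)
    (hF : ∀ i, F i = (∑ j ∈ Ico 1 i, f j) + t * (∑ j ∈ Icc i n, f j) + t)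
    (Sh : ℕ → K)
    (hSh : ∀ i, Sh i =
      (∑ j ∈ Icc i n, (∏ k ∈ Ico i j, 1 / (φ (2*k) * φ (2*k+1))) * (1 + 1 / φ (2*j)))
        + (∏ k ∈ Icc i n, 1 / (φ (2*k) * φ (2*k+1))) * (1 + 1 / φ 0)
        + ∑ j ∈ Ico 1 i, (∏ k ∈ Icc i n, 1 / (φ (2*k) * φ (2*k+1)))
            * (∏ k ∈ range j, 1 / (φ (2*k) * φ (2*k+1))) * (1 + 1 / φ (2*j)))
    (Shlast : K)
    (hShlast : Shlast = (1 + 1 / φ 0)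
        + ∑ j ∈ Icc 1 n, (∏ k ∈ range j, 1 / (φ (2*k) * φ (2*k+1))) * (1 + 1 / φ (2*j))) :
    (∀ i, 1 ≤ i → i ≤ n → Sh i = (b i - g i) * F i / (t * b i * f i))
    ∧ Shlast = (b 0 - g 0) * F (n+1) / (t * b 0) :=
  stmt16_general n K t f b g φ ht hf0 hf hb hg hbg hφeven hφ1 hφodd hφlast F hF Sh hSh Shlast
    hShlast
end

section
/- Under the hypotheses (i)–(v) of the context, for every z ∈ R one has A'(z) · B(z) = B(qz) · A(z), where A(z) = P_{n+1}^{-1}(z·I − D_{n+1}) P_n^{-1}(z·I − D_n) ⋯ P_1^{-1}(z·I − D_1), A'(z) is the same product formed with the primed matrices, and B(z) = Γ_1 + E_1 P_1^{-1}(z·I − D_1). -/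
/-!
Put `B_i(z) = Γ_i + E_i P_i⁻¹ (z I - D_i)`. Relations (i), (ii), (iv) say exactly that each
factor of `A'` and the corresponding factor of `A` are intertwined by the `B`'s:
`P'_i⁻¹ (z I - D'_i) B_i(z) = B_{i+1}(z) P_i⁻¹ (z I - D_i)`; relations (i), (iii), (v) say the
same for `i = n + 1` with `B_{n+2}(z) := B_1(qz)`. The theorem follows by telescoping.
-/

theorem prod_map_reverse_finRange_mul_of_intertwines {M : Type*} [Monoid M] :
    ∀ {N : ℕ} (f g : Fin N → M) (b : Fin (N + 1) → M),
      (∀ i, f i * b i.castSucc = b i.succ * g i) →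
      ((List.finRange N).reverse.map f).prod * b 0
        = b (Fin.last N) * ((List.finRange N).reverse.map g).prod
  | 0, _, _, _, _ => by simp
  | N + 1, f, g, b, h => by
    have ih := prod_map_reverse_finRange_mul_of_intertwines (f ∘ Fin.castSucc)
      (g ∘ Fin.castSucc) (b ∘ Fin.castSucc) fun i => by
        simpa only [Function.comp_apply, Fin.succ_castSucc] using h i.castSucc
    simp only [List.finRange_succ_last, List.reverse_append, List.map_append, List.prod_append,
      List.reverse_singleton, List.map_cons, List.map_nil, List.prod_cons, List.prod_nil, mul_one,
      List.map_reverse, List.map_map, Function.comp_apply] at ih ⊢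
    rw [Fin.castSucc_zero] at ih
    rw [mul_assoc, ih, ← mul_assoc, h, Fin.succ_last, mul_assoc]

section Factors

variable {m R : Type*} [Fintype m] [DecidableEq m] [CommRing R]

noncomputable def linearFactor (P D : Matrix m m R) (z : R) : Matrix m m R :=
  P⁻¹ * (z • 1 - D)

noncomputable def gaugeFactor (Γ E P D : Matrix m m R) (z : R) : Matrix m m R :=
  Γ + E * P⁻¹ * (z • 1 - D)

theorem linearFactor_mul_gaugeFactor
    {P₁ P₂ P₁' D₁ D₂ D₁' Γ₁ Γ₂ E₁ E₂ : Matrix m m R} {c z w : R}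
    (hP₁ : IsUnit P₁) (hP₂ : IsUnit P₂) (hP₁' : IsUnit P₁') (hzw : c * w = z)
    (hΓ : D₁' * Γ₁ = Γ₁ * D₁)
    (hE : D₁' * E₁ + P₁' * Γ₂ = Γ₁ * P₁ + c • (E₁ * D₂))
    (hP : P₁' * E₂ = c • (E₁ * P₂)) :
    linearFactor P₁' D₁' z * gaugeFactor Γ₁ E₁ P₁ D₁ z
      = gaugeFactor Γ₂ E₂ P₂ D₂ w * linearFactor P₁ D₁ z := by
  apply hP₁'.mul_left_cancel
  rw [Matrix.isUnit_iff_isUnit_det] at hP₁ hP₂ hP₁'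
  have hΓL : (z • 1 - D₁') * Γ₁ = Γ₁ * P₁ * linearFactor P₁ D₁ z := by
    rw [linearFactor, mul_assoc, Matrix.mul_nonsing_inv_cancel_left _ _ hP₁]
    simp only [sub_mul, mul_sub, smul_mul_assoc, mul_smul_comm, one_mul, mul_one, hΓ]
  have hEP : P₁' * (E₂ * P₂⁻¹ * (w • 1 - D₂)) = z • E₁ - c • (E₁ * D₂) := by
    rw [← mul_assoc, ← mul_assoc, hP, smul_mul_assoc, smul_mul_assoc,
      Matrix.mul_nonsing_inv_cancel_right _ _ hP₂]
    simp only [mul_sub, mul_smul_comm, mul_one, smul_sub, smul_smul, hzw]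
  calc P₁' * (linearFactor P₁' D₁' z * gaugeFactor Γ₁ E₁ P₁ D₁ z)
      = (Γ₁ * P₁ + z • E₁ - D₁' * E₁) * linearFactor P₁ D₁ z := by
        rw [linearFactor, gaugeFactor, ← mul_assoc, Matrix.mul_nonsing_inv_cancel_left _ _ hP₁',
          mul_add, hΓL, add_sub_assoc, add_mul, mul_assoc E₁, ← mul_assoc, sub_mul,
          smul_one_mul]
        rfl
    _ = (P₁' * Γ₂ + z • E₁ - c • (E₁ * D₂)) * linearFactor P₁ D₁ z := by
        have hE' : Γ₁ * P₁ - D₁' * E₁ = P₁' * Γ₂ - c • (E₁ * D₂) :=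
          sub_eq_sub_iff_add_eq_add.mpr (by rw [← hE, add_comm])
        rw [add_sub_right_comm, hE', add_sub_right_comm]
    _ = P₁' * (gaugeFactor Γ₂ E₂ P₂ D₂ w * linearFactor P₁ D₁ z) := by
        rw [gaugeFactor, ← mul_assoc, mul_add, add_sub_assoc, ← hEP, add_mul]

end Factors

theorem stmt17_general (n : ℕ) (R : Type*) [CommRing R]
    (q qi : R) (hq : q * qi = 1)
    (D D' Γ E P P' : Fin (n+1) → Matrix (Fin 2) (Fin 2) R)
    (hP : ∀ i, IsUnit (P i)) (hP' : ∀ i, IsUnit (P' i))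
    (h1 : ∀ i, D' i * Γ i = Γ i * D i)
    (h2 : ∀ i : Fin (n+1), (i : ℕ) < n →
      D' i * E i + P' i * Γ (i+1) = Γ i * P i + E i * D (i+1))
    (h3 : D' (Fin.last n) * E (Fin.last n) + P' (Fin.last n) * Γ 0
      = Γ (Fin.last n) * P (Fin.last n) + qi • (E (Fin.last n) * D 0))
    (h4 : ∀ i : Fin (n+1), (i : ℕ) < n → P' i * E (i+1) = E i * P (i+1))
    (h5 : P' (Fin.last n) * E 0 = qi • (E (Fin.last n) * P 0)) :
    ∀ z : R,
      (((List.finRange (n+1)).reverse.map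
          (fun i => (P' i)⁻¹ * (z • (1 : Matrix (Fin 2) (Fin 2) R) - D' i))).prod)
        * (Γ 0 + E 0 * (P 0)⁻¹ * (z • (1 : Matrix (Fin 2) (Fin 2) R) - D 0))
      = (Γ 0 + E 0 * (P 0)⁻¹ * ((q * z) • (1 : Matrix (Fin 2) (Fin 2) R) - D 0))
        * (((List.finRange (n+1)).reverse.map
            (fun i => (P i)⁻¹ * (z • (1 : Matrix (Fin 2) (Fin 2) R) - D i))).prod) := by
  intro z
  have hqz : qi * (q * z) = z := by rw [← mul_assoc, mul_comm qi, hq, one_mul]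
  have key := prod_map_reverse_finRange_mul_of_intertwines
    (fun i => linearFactor (P' i) (D' i) z) (fun i => linearFactor (P i) (D i) z)
    (Fin.lastCases (gaugeFactor (Γ 0) (E 0) (P 0) (D 0) (q * z))
      fun i => gaugeFactor (Γ i) (E i) (P i) (D i) z) <| by
    refine Fin.lastCases ?_ fun i => ?_
    · simp only [Fin.lastCases_castSucc, Fin.succ_last, Fin.lastCases_last]
      exact linearFactor_mul_gaugeFactor (hP _) (hP _) (hP' _) hqz (h1 _) h3 h5
    · simp only [Fin.lastCases_castSucc, Fin.succ_castSucc]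
      have hi : (i.castSucc : ℕ) < n := i.is_lt
      refine linearFactor_mul_gaugeFactor (c := 1) (hP _) (hP _) (hP' _) (one_mul z) (h1 _) ?_ ?_
      · simpa only [Fin.coeSucc_eq_succ, one_smul] using h2 _ hi
      · simpa only [Fin.coeSucc_eq_succ, one_smul] using h4 _ hi
  rwa [← Fin.castSucc_zero (n := n + 1), Fin.lastCases_castSucc, Fin.lastCases_last] at key

/-- under the compatibility hypotheses (i)–(v), the compatibility
`A'(z) B(z) = B(qz) A(z)` holds, where
`A(z) = P_{n+1}⁻¹(zI - D_{n+1}) ⋯ P_1⁻¹(zI - D_1)` (indices `1, …, n+1` are encoded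
as `Fin (n+1)` with `0` for `1` and `Fin.last n` for `n+1`), `A'(z)` is the analogous
product of the primed matrices, and `B(z) = Γ_1 + E_1 P_1⁻¹(zI - D_1)`.  The unit `q`
has inverse `qi`. -/
theorem stmt17 (n : ℕ) (hn : 1 ≤ n) (R : Type*) [CommRing R]
    (q qi : R) (hq : q * qi = 1)
    (D D' Γ E P P' : Fin (n+1) → Matrix (Fin 2) (Fin 2) R)
    (hP : ∀ i, IsUnit (P i)) (hP' : ∀ i, IsUnit (P' i))
    (h1 : ∀ i, D' i * Γ i = Γ i * D i)
    (h2 : ∀ i : Fin (n+1), (i : ℕ) < n →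
      D' i * E i + P' i * Γ (i+1) = Γ i * P i + E i * D (i+1))
    (h3 : D' (Fin.last n) * E (Fin.last n) + P' (Fin.last n) * Γ 0
      = Γ (Fin.last n) * P (Fin.last n) + qi • (E (Fin.last n) * D 0))
    (h4 : ∀ i : Fin (n+1), (i : ℕ) < n → P' i * E (i+1) = E i * P (i+1))
    (h5 : P' (Fin.last n) * E 0 = qi • (E (Fin.last n) * P 0)) :
    ∀ z : R,
      (((List.finRange (n+1)).reverse.map
          (fun i => (P' i)⁻¹ * (z • (1 : Matrix (Fin 2) (Fin 2) R) - D' i))).prod)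
        * (Γ 0 + E 0 * (P 0)⁻¹ * (z • (1 : Matrix (Fin 2) (Fin 2) R) - D 0))
      = (Γ 0 + E 0 * (P 0)⁻¹ * ((q * z) • (1 : Matrix (Fin 2) (Fin 2) R) - D 0))
        * (((List.finRange (n+1)).reverse.map
            (fun i => (P i)⁻¹ * (z • (1 : Matrix (Fin 2) (Fin 2) R) - D i))).prod) :=
  stmt17_general n R q qi hq D D' Γ E P P' hP hP' h1 h2 h3 h4 h5
end

section
/- For every z ∈ K, the determinant of the (2n+2)×(2n+2) block matrix M(z) equals t · det(z·I − A(0)), where I is the 2×2 identity matrix and A(0) = M̂_{n+1,1}^{-1}(−M̂_{n+1,n+1}) M̂_{n,n+1}^{-1}(−M̂_{n,n}) ⋯ M̂_{1,2}^{-1}(−M̂_{1,1}) is the value of A at z = 0. -/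
/-- The diagonal block `M̂_{i,i} = (1/a_1) [[a_i, c_i],[0, b_i]]`
(`i = 1, …, n+1`, encoded as `Fin (n+1)` with `0` standing for `1`). -/
noncomputable def Dmat (n : ℕ) {K : Type*} [Field K] (a b c : Fin (n+1) → K)
    (i : Fin (n+1)) : Matrix (Fin 2) (Fin 2) K :=
  (1 / a 0) • !![a i, c i; 0, b i]

/-- The block `M̂_{i,i+1} = (1/a_1) [[-1, 0],[d_i, -1]]` for `i = 1, …, n`, and, for the
last index, the corner block `M̂_{n+1,1} = (1/a_1) [[-t, 0],[h, -1]]`. -/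
noncomputable def Pmat (n : ℕ) {K : Type*} [Field K] (a : Fin (n+1) → K)
    (d : Fin n → K) (t hh : K) (i : Fin (n+1)) : Matrix (Fin 2) (Fin 2) K :=
  if h : (i : ℕ) < n then (1 / a 0) • !![-1, 0; d ⟨i, h⟩, -1]
  else (1 / a 0) • !![-t, 0; hh, -1]

/-- The matrix `A(z) = M̂_{n+1,1}⁻¹(zI - M̂_{n+1,n+1}) ⋯ M̂_{1,2}⁻¹(zI - M̂_{1,1})`. -/
noncomputable def Amat (n : ℕ) {K : Type*} [Field K] (a b c : Fin (n+1) → K)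
    (d : Fin n → K) (t hh : K) (z : K) : Matrix (Fin 2) (Fin 2) K :=
  (((List.finRange (n+1)).reverse.map
      (fun i => (Pmat n a d t hh i)⁻¹
        * (z • (1 : Matrix (Fin 2) (Fin 2) K) - Dmat n a b c i))).prod)

/-- The `(2n+2) × (2n+2)` block matrix `M(z)`: diagonal blocks
`M_{i,i} = [[a_i, c_i],[0, b_i]]`, superdiagonal blocks `M_{i,i+1} = [[-1,0],[d_i,-1]]`,
bottom-left corner block `z·M_{n+1,1} = z·[[-t,0],[h,-1]]`, all other blocks zero. -/
noncomputable def Mblock (n : ℕ) {K : Type*} [Field K] (a b c : Fin (n+1) → K)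
    (d : Fin n → K) (t hh : K) (z : K) :
    Matrix (Fin (n+1) × Fin 2) (Fin (n+1) × Fin 2) K :=
  Matrix.of fun p q =>
    if p.1 = q.1 then !![a p.1, c p.1; 0, b p.1] p.2 q.2
    else if h : (q.1 : ℕ) = (p.1 : ℕ) + 1 then
      !![-1, 0; d ⟨p.1, by have := q.1.isLt; omega⟩, -1] p.2 q.2
    else if p.1 = Fin.last n ∧ q.1 = 0 then z * (!![-t, 0; hh, -1] p.2 q.2)
    else 0

/-!
Put `C₀ = I` and `C_k = M_{k,k+1}⁻¹(-M_{k,k}) C_{k-1}` for `k = 1, …, n+1`, where `M_{n+1,n+2}`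
means `M_{n+1,1}`. Right-multiplying `M(z)` by the block-unipotent matrix with first block column
`C₀, …, Cₙ` (a block column operation, so the determinant is unchanged) clears the first block
column except for the corner, which becomes `M_{n+1,1}(zI - C_{n+1})`. Rotating the block columns
by one place, a permutation of sign `1` for `2 × 2` blocks, leaves a block lower-triangular
matrix with diagonal blocks `M_{1,2}, …, M_{n,n+1}, M_{n+1,1}(zI - C_{n+1})`, whose determinants
multiply to `t · det(zI - C_{n+1})`. Finally `C_{n+1} = A(0)`, since the scalars `1/a₁` cancel in
each factor.
-/

namespace Matrix

variable {R ι : Type*} [CommRing R] {m : ℕ}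

/-- `j = i + 1` is taken in `Fin (m + 1)`, so the block `P (Fin.last m)`, scaled by `z`, sits in
the corner `(m, 0)`. -/
def cyclicBidiagonal (D P : Fin (m+1) → Matrix ι ι R) (z : R) :
    Matrix (Fin (m+1)) (Fin (m+1)) (Matrix ι ι R) :=
  diagonal D + of fun i j => if j = i + 1 then (if i = Fin.last m then z else 1) • P i else 0

theorem cyclicBidiagonal_apply_add_one (D P : Fin (m+1) → Matrix ι ι R) (z : R)
    {i : Fin (m+1)} (hi : i ≠ Fin.last m) : cyclicBidiagonal D P z i (i + 1) = P i := by
  have hi1 : i ≠ i + 1 := fun h => by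
    have h1 := congrArg Fin.val h
    rw [Fin.val_add_one_of_lt (Fin.lt_last_iff_ne_last.2 hi)] at h1
    omega
  simp [cyclicBidiagonal, hi, hi1]

theorem cyclicBidiagonal_apply_eq_zero (D P : Fin (m+1) → Matrix ι ι R) (z : R)
    {i j : Fin (m+1)} (hij : i ≠ j) (hj : j ≠ i + 1) : cyclicBidiagonal D P z i j = 0 := by
  simp [cyclicBidiagonal, hij, hj]

variable [Fintype ι]

theorem comp_mul {α : Type*} [Fintype α] (X Y : Matrix α α (Matrix ι ι R)) :
    comp α α ι ι R (X * Y) = comp α α ι ι R X * comp α α ι ι R Y :=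
  map_mul (compRingEquiv α ι R) X Y

theorem cyclicBidiagonal_mul_apply (D P : Fin (m+1) → Matrix ι ι R) (z : R)
    (X : Matrix (Fin (m+1)) (Fin (m+1)) (Matrix ι ι R)) (i j : Fin (m+1)) :
    (cyclicBidiagonal D P z * X) i j
      = D i * X i j + (if i = Fin.last m then z else 1) • (P i * X (i + 1) j) := by
  rw [cyclicBidiagonal, add_mul, add_apply, diagonal_mul, mul_apply]
  simp [ite_mul]

variable [DecidableEq ι]

theorem det_comp_of_isLowerTriangular {α : Type*} [Fintype α] [LinearOrder α]
    (M : Matrix α α (Matrix ι ι R)) (hM : M.IsLowerTriangular) :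
    (comp α α ι ι R M).det = ∏ i, (M i i).det := by
  rw [hM.comp.det_fintype]
  refine Fintype.prod_congr _ _ fun i => ?_
  let e : ι ≃ {p : α × ι // OrderDual.toDual p.1 = i} :=
    { toFun := fun x => ⟨(i, x), rfl⟩
      invFun := fun p => p.1.2
      left_inv := fun _ => rfl
      right_inv := fun ⟨⟨_, _⟩, hj⟩ => by cases hj; rfl }
  rw [← det_submatrix_equiv_self e]
  rfl

theorem det_comp_submatrix_add_one (X : Matrix (Fin (m+1)) (Fin (m+1)) (Matrix ι ι R)) :
    (comp _ _ ι ι R (X.submatrix id (· + 1))).det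
      = ((-1) ^ m) ^ Fintype.card ι * (comp _ _ ι ι R X).det := by
  have hrot : comp _ _ ι ι R (X.submatrix id (· + 1))
      = (comp _ _ ι ι R X).submatrix id (Equiv.prodCongrLeft fun _ => finRotate (m+1)) := by
    ext ⟨i, k⟩ ⟨j, l⟩
    simp [finRotate_apply]
  rw [hrot, det_permute', Equiv.Perm.sign_prodCongrLeft, Finset.prod_const, sign_finRotate,
    Finset.card_univ]
  push_cast
  simp

def firstColumnUnipotent (C : ℕ → Matrix ι ι R) :
    Matrix (Fin (m+1)) (Fin (m+1)) (Matrix ι ι R) :=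
  of fun i j => if j = 0 then C i else (1 : Matrix _ _ (Matrix ι ι R)) i j

theorem det_comp_firstColumnUnipotent (C : ℕ → Matrix ι ι R) (hC₀ : C 0 = 1) :
    (comp _ _ ι ι R (firstColumnUnipotent (m := m) C)).det = 1 := by
  rw [det_comp_of_isLowerTriangular]
  · refine Finset.prod_eq_one fun i _ => ?_
    by_cases hi : i = 0 <;> simp [firstColumnUnipotent, hi, hC₀]
  · intro i j hij
    rw [OrderDual.toDual_lt_toDual] at hij
    have hj : j ≠ 0 := fun h => by simp [h] at hij
    simp [firstColumnUnipotent, hj, one_apply_ne (ne_of_lt hij)]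

theorem mul_firstColumnUnipotent_apply_of_ne_zero
    (X : Matrix (Fin (m+1)) (Fin (m+1)) (Matrix ι ι R)) (C : ℕ → Matrix ι ι R)
    (i : Fin (m+1)) {j : Fin (m+1)} (hj : j ≠ 0) :
    (X * firstColumnUnipotent (m := m) C) i j = X i j := by
  simp [firstColumnUnipotent, hj, mul_apply, one_apply]

theorem cyclicBidiagonal_mul_firstColumnUnipotent_apply_zero (D P : Fin (m+1) → Matrix ι ι R)
    (z : R) (C : ℕ → Matrix ι ι R) (hC₀ : C 0 = 1)
    (hC : ∀ i : Fin (m+1), P i * C (i + 1) = -(D i * C i)) (i : Fin (m+1)) :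
    (cyclicBidiagonal D P z * firstColumnUnipotent (m := m) C) i 0
      = if i = Fin.last m then P i * (z • 1 - C (m+1)) else 0 := by
  simp only [cyclicBidiagonal_mul_apply, firstColumnUnipotent, of_apply, if_true]
  split_ifs with hi
  · subst hi
    have h := hC (Fin.last m)
    rw [Fin.val_last] at h ⊢
    rw [Fin.last_add_one, Fin.val_zero, hC₀, mul_sub, h, mul_one, mul_smul_comm, mul_one,
      sub_neg_eq_add, add_comm]
  · rw [Fin.val_add_one, if_neg hi, one_smul, hC, add_neg_cancel]

theorem det_comp_cyclicBidiagonal (D P : Fin (m+1) → Matrix ι ι R) (z : R)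
    (C : ℕ → Matrix ι ι R) (hC₀ : C 0 = 1)
    (hC : ∀ i : Fin (m+1), P i * C (i + 1) = -(D i * C i)) :
    (comp _ _ ι ι R (cyclicBidiagonal D P z)).det
      = ((-1) ^ m) ^ Fintype.card ι * (∏ i, (P i).det) * (z • 1 - C (m+1)).det := by
  set B := cyclicBidiagonal D P z
  set V := firstColumnUnipotent (m := m) C
  set W := (B * V).submatrix id (· + 1)
  have hW_last (i : Fin (m+1)) :
      W i (Fin.last m) = if i = Fin.last m then P i * (z • 1 - C (m+1)) else 0 := by
    simp only [W, submatrix_apply, id, Fin.last_add_one]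
    exact cyclicBidiagonal_mul_firstColumnUnipotent_apply_zero D P z C hC₀ hC i
  have hW (i : Fin (m+1)) {j : Fin (m+1)} (hj : j ≠ Fin.last m) : W i j = B i (j + 1) := by
    refine mul_firstColumnUnipotent_apply_of_ne_zero B C i fun h => ?_
    rw [Fin.ext_iff, Fin.val_add_one_of_lt (Fin.lt_last_iff_ne_last.2 hj)] at h
    simp at h
  have hW_lower : W.IsLowerTriangular := by
    intro i j hij
    rw [OrderDual.toDual_lt_toDual] at hij
    by_cases hj : j = Fin.last m
    · rw [hj, hW_last, if_neg (hj ▸ hij).ne]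
    · rw [hW i hj]
      refine cyclicBidiagonal_apply_eq_zero D P z (fun h => ?_)
        fun h => hij.ne (add_right_cancel h).symm
      have h1 := congrArg Fin.val h
      rw [Fin.val_add_one_of_lt (Fin.lt_last_iff_ne_last.2 hj), Fin.lt_def] at *
      omega
  have hW_diag (i : Fin (m+1)) :
      W i i = if i = Fin.last m then P i * (z • 1 - C (m+1)) else P i := by
    by_cases hi : i = Fin.last m
    · rw [hi, hW_last, if_pos rfl, if_pos rfl]
    · rw [hW i hi, if_neg hi]
      exact cyclicBidiagonal_apply_add_one D P z hi
  have hsign : (((-1 : R) ^ m) ^ Fintype.card ι) * ((-1) ^ m) ^ Fintype.card ι = 1 := by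
    rw [← mul_pow, ← mul_pow]
    simp
  calc (comp _ _ ι ι R B).det = (comp _ _ ι ι R (B * V)).det := by
        rw [comp_mul, det_mul, det_comp_firstColumnUnipotent C hC₀, mul_one]
    _ = ((-1) ^ m) ^ Fintype.card ι * (comp _ _ ι ι R W).det := by
        rw [det_comp_submatrix_add_one, ← mul_assoc, hsign, one_mul]
    _ = _ := by
        rw [det_comp_of_isLowerTriangular _ hW_lower, Fin.prod_univ_castSucc,
          Fin.prod_univ_castSucc (fun i => (P i).det)]
        simp only [hW_diag, Fin.castSucc_ne_last, if_false, if_true, det_mul]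
        ring

end Matrix

theorem List.prod_map_reverse_take_finRange_succ {M : Type*} [Monoid M] {m : ℕ}
    (T : Fin (m+1) → M) (i : Fin (m+1)) :
    (((List.finRange (m+1)).take (i + 1)).reverse.map T).prod
      = T i * (((List.finRange (m+1)).take i).reverse.map T).prod := by
  rw [List.take_add_one, List.getElem?_eq_getElem (by simpa using i.is_le)]
  simp

theorem Fin.eq_add_one_iff_val_eq_or {m : ℕ} (i j : Fin (m+1)) :
    j = i + 1 ↔ (j : ℕ) = i + 1 ∨ (i = Fin.last m ∧ j = 0) := by
  rw [Fin.ext_iff, Fin.val_add_one]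
  split_ifs with h
  · have := j.isLt
    simp only [h, true_and, Fin.ext_iff, Fin.val_zero, Fin.val_last]
    omega
  · simp only [h, false_and, or_false]

section

open Matrix

variable {K : Type*} [Field K] {n : ℕ}

/-- The unscaled block `M_{i,i}`. -/
def diagBlock (a b c : Fin (n+1) → K) (i : Fin (n+1)) : Matrix (Fin 2) (Fin 2) K :=
  !![a i, c i; 0, b i]

/-- The unscaled block `M_{i,i+1}`, and `M_{n+1,1}` at the last index. -/
def superBlock (d : Fin n → K) (t hh : K) (i : Fin (n+1)) : Matrix (Fin 2) (Fin 2) K :=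
  if h : (i : ℕ) < n then !![-1, 0; d ⟨i, h⟩, -1] else !![-t, 0; hh, -1]

theorem det_superBlock (d : Fin n → K) (t hh : K) (i : Fin (n+1)) :
    (superBlock d t hh i).det = if (i : ℕ) < n then 1 else t := by
  unfold superBlock
  split_ifs <;> simp [det_fin_two_of]

theorem prod_det_superBlock (d : Fin n → K) (t hh : K) :
    ∏ i, (superBlock d t hh i).det = t := by
  simp [Fin.prod_univ_castSucc, det_superBlock]

theorem isUnit_det_superBlock (d : Fin n → K) {t : K} (hh : K) (ht : t ≠ 0) (i : Fin (n+1)) :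
    IsUnit (superBlock d t hh i).det := by
  rw [det_superBlock]
  split_ifs <;> simp [ht]

theorem Pmat_eq_smul (a : Fin (n+1) → K) (d : Fin n → K) (t hh : K) (i : Fin (n+1)) :
    Pmat n a d t hh i = (1 / a 0) • superBlock d t hh i := by
  unfold Pmat superBlock
  split_ifs <;> rfl

theorem Mblock_eq_comp (hn : 1 ≤ n) (a b c : Fin (n+1) → K) (d : Fin n → K) (t hh z : K) :
    Mblock n a b c d t hh z
      = comp _ _ _ _ K (cyclicBidiagonal (diagBlock a b c) (superBlock d t hh) z) := by
  ext ⟨i, k⟩ ⟨j, l⟩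
  simp only [Mblock, comp_apply, cyclicBidiagonal, Matrix.add_apply, diagonal_apply, of_apply,
    Fin.eq_add_one_iff_val_eq_or]
  by_cases hij : i = j
  · subst hij
    have hi : ¬ ((i : ℕ) = i + 1 ∨ (i = Fin.last n ∧ i = 0)) := by
      rintro (h | ⟨rfl, h⟩)
      · omega
      · simp [Fin.ext_iff] at h; omega
    rw [if_pos rfl, if_pos rfl, if_neg hi, Matrix.zero_apply, add_zero]
    rfl
  rw [if_neg hij, if_neg hij, Matrix.zero_apply, zero_add]
  by_cases hsucc : (j : ℕ) = i + 1
  · have hi : (i : ℕ) < n := by have := j.isLt; omega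
    have hil : i ≠ Fin.last n := fun h => by simp [h] at hi
    rw [dif_pos hsucc, if_pos (Or.inl hsucc), if_neg hil, one_smul, superBlock, dif_pos hi]
    rfl
  rw [dif_neg hsucc]
  by_cases hcorner : i = Fin.last n ∧ j = 0
  · rw [if_pos hcorner, if_pos (Or.inr hcorner), if_pos hcorner.1, superBlock,
      dif_neg (by simp [hcorner.1])]
    rfl
  · rw [if_neg hcorner, if_neg (by tauto), Matrix.zero_apply]

theorem Amat_zero_eq {a : Fin (n+1) → K} (b c : Fin (n+1) → K) (d : Fin n → K) {t : K}
    (hh : K) (ha : a 0 ≠ 0) (ht : t ≠ 0) :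
    Amat n a b c d t hh 0 = ((List.finRange (n+1)).reverse.map
      fun i => (superBlock d t hh i)⁻¹ * -diagBlock a b c i).prod := by
  unfold Amat
  congr 1
  refine List.map_congr_left fun i _ => ?_
  have : Invertible (1 / a 0) := invertibleOfNonzero (by simpa using ha)
  rw [Pmat_eq_smul, Dmat, inv_smul _ _ (isUnit_det_superBlock d hh ht i), zero_smul,
    zero_sub, ← smul_neg, smul_mul_smul_comm, invOf_mul_self, one_smul]
  rfl

end

/-- `det M(z) = t · det (z·I - A(0))`. -/
theorem stmt19 (n : ℕ) (hn : 1 ≤ n) (K : Type*) [Field K]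
    (a b c : Fin (n+1) → K) (d : Fin n → K) (t hh : K)
    (ha : a 0 ≠ 0) (ht : t ≠ 0) :
    ∀ z : K, (Mblock n a b c d t hh z).det
      = t * (z • (1 : Matrix (Fin 2) (Fin 2) K) - Amat n a b c d t hh 0).det := by
  intro z
  set T := fun i => (superBlock d t hh i)⁻¹ * -diagBlock a b c i
  have hT (i : Fin (n+1)) : superBlock d t hh i * T i = -diagBlock a b c i := by
    rw [← Matrix.mul_assoc, Matrix.mul_nonsing_inv _ (isUnit_det_superBlock d hh ht i),
      Matrix.one_mul]
  rw [Mblock_eq_comp hn, Matrix.det_comp_cyclicBidiagonal _ _ z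
      (fun k => (((List.finRange (n+1)).take k).reverse.map T).prod) (by simp)
      (fun i => by
        rw [List.prod_map_reverse_take_finRange_succ, ← Matrix.mul_assoc, hT, Matrix.neg_mul]),
    List.take_of_length_le (by simp), Amat_zero_eq b c d hh ha ht, prod_det_superBlock]
  rw [Fintype.card_fin, ← pow_mul, pow_mul', neg_one_sq, one_pow, one_mul]
end
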